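/- Let K(t) = ∫_{0}^{1} dx/√((1−x²)(1−t·x²)) for t ∈ (0,1), and define the elliptic nome of modulus parameter t by q(t) = exp(−π·K(1−t)/K(t)). Then lim_{t→0⁺} q(t)/t = 1/16. -/

import Mathlib

/-!
The bounds `π/2 ≤ K(t) ≤ π/(2√(1-t))` give `π/K(t) = 2 + O(t)`. For the complementary integral,
the substitution `z = 1 - x²` gives `K(1-t) = ∫₀¹ dz / (2√z √(1-z) √(t + (1-t)z))`, whose
logarithmic singularity at `t = 0` is that of `∫₀¹ dz / (2√z √(t+z)) = log (1 + √(1+t)) - log √t`.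
The difference is dominated by `1/√(1-z)` and tends to `∫₀¹ (1/√(1-z) - 1) dz/(2z) = log 2`, so
`K(1-t) = log (4/√t) + o(1)` and `-π K(1-t)/K(t) = log (t/16) + o(1)`.
-/

open Real MeasureTheory Filter Set Topology

section FTC

variable {f f' : ℝ → ℝ} {a b : ℝ}

theorem integrableOn_Ioo_deriv_of_nonneg (hcont : ContinuousOn f (Icc a b))
    (hderiv : ∀ x ∈ Ioo a b, HasDerivAt f (f' x) x) (hpos : ∀ x ∈ Ioo a b, 0 ≤ f' x) :
    IntegrableOn f' (Ioo a b) :=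
  (intervalIntegral.integrableOn_deriv_of_nonneg hcont hderiv hpos).mono_set Ioo_subset_Ioc_self

theorem setIntegral_Ioo_eq_sub_of_hasDerivAt_of_nonneg (hab : a ≤ b)
    (hcont : ContinuousOn f (Icc a b)) (hderiv : ∀ x ∈ Ioo a b, HasDerivAt f (f' x) x)
    (hpos : ∀ x ∈ Ioo a b, 0 ≤ f' x) :
    ∫ x in Ioo a b, f' x = f b - f a := by
  rw [← integral_Ioc_eq_integral_Ioo, ← intervalIntegral.integral_of_le hab]
  exact intervalIntegral.integral_eq_sub_of_hasDerivAt_of_le hab hcont hderiv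
    ((intervalIntegrable_iff_integrableOn_Ioc_of_le hab).2
      (intervalIntegral.integrableOn_deriv_of_nonneg hcont hderiv hpos))

end FTC

theorem integrableOn_one_div_sqrt_one_sub : IntegrableOn (fun z : ℝ => 1 / √(1 - z)) (Ioo 0 1) := by
  refine integrableOn_Ioo_deriv_of_nonneg (f := fun z => -2 * √(1 - z)) (by fun_prop)
    (fun z hz => ?_) (fun z _ => by positivity)
  have h : 0 < 1 - z := sub_pos.2 hz.2
  refine ((((hasDerivAt_id' z).const_sub 1).sqrt h.ne').const_mul (-2)).congr_deriv ?_
  field_simp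

theorem hasDerivAt_arcsin_of_mem_Ioo {x : ℝ} (hx : x ∈ Ioo (0:ℝ) 1) :
    HasDerivAt arcsin (1 / √(1 - x ^ 2)) x :=
  hasDerivAt_arcsin (by linarith [hx.1]) hx.2.ne

theorem integrableOn_one_div_sqrt_one_sub_sq :
    IntegrableOn (fun x : ℝ => 1 / √(1 - x ^ 2)) (Ioo 0 1) :=
  integrableOn_Ioo_deriv_of_nonneg continuous_arcsin.continuousOn
    (fun _ hx => hasDerivAt_arcsin_of_mem_Ioo hx) (fun _ _ => by positivity)

theorem integral_one_div_sqrt_one_sub_sq : ∫ x in Ioo (0:ℝ) 1, 1 / √(1 - x ^ 2) = π / 2 := by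
  rw [setIntegral_Ioo_eq_sub_of_hasDerivAt_of_nonneg zero_le_one continuous_arcsin.continuousOn
    (fun _ hx => hasDerivAt_arcsin_of_mem_Ioo hx) (fun _ _ => by positivity),
    arcsin_one, arcsin_zero, sub_zero]

noncomputable def ellipticK (m : ℝ) : ℝ :=
  ∫ x in Ioo (0 : ℝ) 1, 1 / √((1 - x ^ 2) * (1 - m * x ^ 2))

section EllipticKBounds

variable {m x : ℝ}

theorem one_div_sqrt_one_sub_sq_le (hm0 : 0 ≤ m) (hm1 : m < 1) (hx : x ∈ Ioo (0 : ℝ) 1) :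
    1 / √(1 - x ^ 2) ≤ 1 / √((1 - x ^ 2) * (1 - m * x ^ 2)) := by
  have hx2 : x ^ 2 < 1 := by nlinarith [hx.1, hx.2]
  have hmx : m * x ^ 2 < 1 := by nlinarith
  exact one_div_le_one_div_of_le (sqrt_pos.2 (mul_pos (by linarith) (by linarith)))
    (sqrt_le_sqrt (mul_le_of_le_one_right (by linarith) (by nlinarith)))

theorem one_div_sqrt_mul_le (hm0 : 0 ≤ m) (hm1 : m < 1) (hx : x ∈ Ioo (0 : ℝ) 1) :
    1 / √((1 - x ^ 2) * (1 - m * x ^ 2)) ≤ 1 / √(1 - m) * (1 / √(1 - x ^ 2)) := by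
  have hx2 : x ^ 2 < 1 := by nlinarith [hx.1, hx.2]
  rw [div_mul_div_comm, one_mul, ← sqrt_mul (by linarith)]
  refine one_div_le_one_div_of_le (sqrt_pos.2 (mul_pos (by linarith) (by linarith)))
    (sqrt_le_sqrt ?_)
  rw [mul_comm]
  exact mul_le_mul_of_nonneg_left (by nlinarith) (by linarith)

theorem integrableOn_ellipticK_integrand (hm0 : 0 ≤ m) (hm1 : m < 1) :
    IntegrableOn (fun x : ℝ => 1 / √((1 - x ^ 2) * (1 - m * x ^ 2))) (Ioo 0 1) := by
  refine (integrableOn_one_div_sqrt_one_sub_sq.const_mul (1 / √(1 - m))).mono'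
    (by fun_prop : Measurable _).aestronglyMeasurable
    ((ae_restrict_iff' measurableSet_Ioo).2 (ae_of_all _ fun x hx => ?_))
  rw [norm_of_nonneg (by positivity)]
  exact one_div_sqrt_mul_le hm0 hm1 hx

theorem pi_div_two_le_ellipticK (hm0 : 0 ≤ m) (hm1 : m < 1) : π / 2 ≤ ellipticK m := by
  rw [← integral_one_div_sqrt_one_sub_sq]
  exact setIntegral_mono_on integrableOn_one_div_sqrt_one_sub_sq
    (integrableOn_ellipticK_integrand hm0 hm1) measurableSet_Ioo
    fun _ hx => one_div_sqrt_one_sub_sq_le hm0 hm1 hx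

theorem ellipticK_le (hm0 : 0 ≤ m) (hm1 : m < 1) : ellipticK m ≤ 1 / √(1 - m) * (π / 2) := by
  rw [← integral_one_div_sqrt_one_sub_sq, ← integral_const_mul]
  exact setIntegral_mono_on (integrableOn_ellipticK_integrand hm0 hm1)
    (integrableOn_one_div_sqrt_one_sub_sq.const_mul _) measurableSet_Ioo
    fun _ hx => one_div_sqrt_mul_le hm0 hm1 hx

theorem abs_pi_div_ellipticK_sub_two_le (hm0 : 0 ≤ m) (hm1 : m < 1) :
    |π / ellipticK m - 2| ≤ 2 * m := by
  have hK := pi_div_two_le_ellipticK hm0 hm1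
  have hKpos : 0 < ellipticK m := lt_of_lt_of_le (by positivity) hK
  have hs : 0 < √(1 - m) := sqrt_pos.2 (by linarith)
  have hsqrt : 1 - m ≤ √(1 - m) := by
    rw [le_sqrt (by linarith) (by linarith)]; nlinarith
  have hle : π / ellipticK m ≤ 2 := by rw [div_le_iff₀ hKpos]; linarith
  have hge : 2 * √(1 - m) ≤ π / ellipticK m := by
    rw [le_div_iff₀ hKpos]
    calc 2 * √(1 - m) * ellipticK m ≤ 2 * √(1 - m) * (1 / √(1 - m) * (π / 2)) := by
          gcongr; exact ellipticK_le hm0 hm1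
      _ = π := by field_simp
  rw [abs_of_nonpos (by linarith)]
  linarith

theorem eventually_abs_pi_div_ellipticK_sub_two_le :
    ∀ᶠ t in 𝓝[>] 0, |π / ellipticK t - 2| ≤ 2 * t := by
  filter_upwards [Ioo_mem_nhdsGT zero_lt_one] with t ht
  exact abs_pi_div_ellipticK_sub_two_le ht.1.le ht.2

theorem tendsto_pi_div_ellipticK : Tendsto (fun t => π / ellipticK t) (𝓝[>] 0) (𝓝 2) := by
  have h : Tendsto (fun t : ℝ => 2 * t) (𝓝[>] 0) (𝓝 0) :=
    tendsto_nhdsWithin_of_tendsto_nhds (by simpa using (continuous_const_mul (2 : ℝ)).tendsto 0)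
  exact tendsto_iff_norm_sub_tendsto_zero.2
    (squeeze_zero' (.of_forall fun _ => norm_nonneg _) eventually_abs_pi_div_ellipticK_sub_two_le h)

theorem tendsto_pi_div_ellipticK_sub_two_mul_log :
    Tendsto (fun t => (π / ellipticK t - 2) * log t) (𝓝[>] 0) (𝓝 0) := by
  have h : Tendsto (fun t : ℝ => 2 * |t * log t|) (𝓝[>] 0) (𝓝 0) :=
    tendsto_nhdsWithin_of_tendsto_nhds
      (by simpa using ((continuous_mul_log.abs.const_mul 2).tendsto 0))
  refine squeeze_zero_norm' ?_ h
  filter_upwards [eventually_abs_pi_div_ellipticK_sub_two_le, self_mem_nhdsWithin]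
    with t ht (ht0 : 0 < t)
  rw [norm_mul, norm_eq_abs, norm_eq_abs, abs_mul, abs_of_pos ht0, ← mul_assoc]
  exact mul_le_mul_of_nonneg_right ht (abs_nonneg _)

end EllipticKBounds

theorem image_one_sub_sq_Ioo : (fun x : ℝ => 1 - x ^ 2) '' Ioo 0 1 = Ioo 0 1 := by
  ext y
  constructor
  · rintro ⟨x, ⟨hx0, hx1⟩, rfl⟩
    constructor <;> nlinarith
  · rintro ⟨hy0, hy1⟩
    refine ⟨√(1 - y), ⟨sqrt_pos.2 (by linarith), (sqrt_lt' one_pos).2 (by linarith)⟩, ?_⟩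
    simp only [sq_sqrt (by linarith : 0 ≤ 1 - y)]
    ring

theorem ellipticK_one_sub_eq_integral (t : ℝ) :
    ellipticK (1 - t) = ∫ z in Ioo 0 1, 1 / (2 * √z * √(1 - z) * √(t + (1 - t) * z)) := by
  have hinj : InjOn (fun x : ℝ => 1 - x ^ 2) (Ioo 0 1) := fun a ha b hb h => by
    nlinarith [ha.1, hb.1]
  have hsubst := integral_image_eq_integral_abs_deriv_smul measurableSet_Ioo
    (fun x _ => ((hasDerivAt_pow 2 x).const_sub 1).hasDerivWithinAt) hinj
    (fun z => 1 / (2 * √z * √(1 - z) * √(t + (1 - t) * z)))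
  rw [image_one_sub_sq_Ioo] at hsubst
  rw [hsubst, ellipticK]
  refine setIntegral_congr_fun measurableSet_Ioo fun x ⟨hx0, hx1⟩ => ?_
  have hx : 0 ≤ 1 - x ^ 2 := by nlinarith
  simp only [smul_eq_mul, sub_sub_cancel, sqrt_sq hx0.le, Nat.cast_ofNat]
  rw [sqrt_mul hx, show t + (1 - t) * (1 - x ^ 2) = 1 - (1 - t) * x ^ 2 by ring, pow_one, abs_neg,
    abs_of_pos (by positivity)]
  field_simp

section LogarithmicPart

variable {t : ℝ}

theorem hasDerivAt_log_sqrt_add_sqrt_add {z : ℝ} (hz : 0 < z) (htz : 0 < t + z) :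
    HasDerivAt (fun z => log (√z + √(t + z))) (1 / (2 * √z * √(t + z))) z := by
  have hs : 0 < √z := sqrt_pos.2 hz
  have hs' : 0 < √(t + z) := sqrt_pos.2 htz
  have hsum := (hasDerivAt_sqrt hz.ne').add (((hasDerivAt_id' z).const_add t).sqrt htz.ne')
  simp only [Pi.add_def] at hsum
  refine (hsum.log (by positivity)).congr_deriv ?_
  field_simp
  ring

theorem continuousOn_log_sqrt_add_sqrt_add (ht : 0 < t) :
    ContinuousOn (fun z => log (√z + √(t + z))) (Icc 0 1) :=
  ContinuousOn.log (by fun_prop) fun z hz => by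
    have : 0 < √(t + z) := sqrt_pos.2 (by linarith [hz.1])
    positivity

theorem integrableOn_one_div_two_sqrt_mul_sqrt_add (ht : 0 < t) :
    IntegrableOn (fun z => 1 / (2 * √z * √(t + z))) (Ioo 0 1) :=
  integrableOn_Ioo_deriv_of_nonneg (continuousOn_log_sqrt_add_sqrt_add ht)
    (fun _ hz => hasDerivAt_log_sqrt_add_sqrt_add hz.1 (by linarith [hz.1]))
    (fun _ _ => by positivity)

theorem integral_one_div_two_sqrt_mul_sqrt_add (ht : 0 < t) :
    ∫ z in Ioo 0 1, 1 / (2 * √z * √(t + z)) = log (1 + √(1 + t)) - log t / 2 := by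
  rw [setIntegral_Ioo_eq_sub_of_hasDerivAt_of_nonneg zero_le_one
    (continuousOn_log_sqrt_add_sqrt_add ht)
    (fun _ hz => hasDerivAt_log_sqrt_add_sqrt_add hz.1 (by linarith [hz.1]))
    (fun _ _ => by positivity)]
  simp [add_comm t, log_sqrt ht.le]

end LogarithmicPart

/-- The integrand of `ellipticK (1 - t)` in the variable `z = 1 - x²`, minus its logarithmic
part `1 / (2√z √(t + z))`. -/
noncomputable def ellipticKRemainder (t z : ℝ) : ℝ :=
  1 / (2 * √z * √(1 - z) * √(t + (1 - t) * z)) - 1 / (2 * √z * √(t + z))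

section Remainder

variable {t z : ℝ}

theorem ellipticKRemainder_nonneg_and_le (ht : 0 ≤ t) (hz : z ∈ Ioo (0 : ℝ) 1) :
    0 ≤ ellipticKRemainder t z ∧ ellipticKRemainder t z ≤ 1 / √(1 - z) := by
  obtain ⟨hz0, hz1⟩ := hz
  have hP : 0 < t + (1 - t) * z := by nlinarith
  have ha : 0 < √z := sqrt_pos.2 hz0
  have hb : 0 < √(1 - z) := sqrt_pos.2 (by linarith)
  have hp : 0 < √(t + (1 - t) * z) := sqrt_pos.2 hP
  have hq : 0 < √(t + z) := sqrt_pos.2 (by linarith)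
  have ha2 := sq_sqrt hz0.le
  have hb2 := sq_sqrt (by linarith : 0 ≤ 1 - z)
  have hp2 := sq_sqrt hP.le
  have hq2 := sq_sqrt (by linarith : 0 ≤ t + z)
  have hsub : ellipticKRemainder t z = (√(t + z) - √(1 - z) * √(t + (1 - t) * z)) /
      (2 * √z * √(1 - z) * √(t + (1 - t) * z) * √(t + z)) := by
    rw [ellipticKRemainder, div_sub_div _ _ (by positivity) (by positivity),
      div_eq_div_iff (by positivity) (by positivity)]
    ring
  set a := √z
  set b := √(1 - z)
  set p := √(t + (1 - t) * z)
  set q := √(t + z)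
  -- `q² - (b p)² = z (2t + (1 - t) z)` lies between `0` and `2 z q²`
  have hgap : q ^ 2 - (b * p) ^ 2 = a ^ 2 * (2 * t + (1 - t) * a ^ 2) := by
    rw [mul_pow, ha2, hb2, hp2, hq2]; ring
  have hbp : b * p ≤ q := by nlinarith [mul_pos hb hp]
  have hap : a ≤ p := by nlinarith
  have hq_sub : q - b * p ≤ 2 * a ^ 2 * q := by
    refine le_of_mul_le_mul_right ?_ hq
    calc (q - b * p) * q ≤ (q - b * p) * (q + b * p) := by
          nlinarith [mul_nonneg (sub_nonneg.2 hbp) (mul_pos hb hp).le]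
      _ = a ^ 2 * (2 * t + (1 - t) * a ^ 2) := by rw [← hgap]; ring
      _ ≤ 2 * a ^ 2 * q * q := by
          nlinarith [mul_nonneg (mul_nonneg (sq_nonneg a) (sq_nonneg a)) (by linarith : 0 ≤ 1 + t)]
  rw [hsub]
  refine ⟨div_nonneg (by linarith) (by positivity), ?_⟩
  rw [div_le_div_iff₀ (by positivity) hb]
  calc (q - b * p) * b ≤ 2 * a ^ 2 * q * b := mul_le_mul_of_nonneg_right hq_sub hb.le
    _ = 2 * a * b * q * a := by ring
    _ ≤ 2 * a * b * q * p := mul_le_mul_of_nonneg_left hap (by positivity)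
    _ = 1 * (2 * a * b * p * q) := by ring

theorem integrableOn_ellipticKRemainder (ht : 0 ≤ t) :
    IntegrableOn (ellipticKRemainder t) (Ioo 0 1) := by
  refine integrableOn_one_div_sqrt_one_sub.mono'
    (by unfold ellipticKRemainder; fun_prop : Measurable _).aestronglyMeasurable
    ((ae_restrict_iff' measurableSet_Ioo).2 (ae_of_all _ fun z hz => ?_))
  obtain ⟨h0, h1⟩ := ellipticKRemainder_nonneg_and_le ht hz
  rwa [norm_of_nonneg h0]

theorem hasDerivAt_neg_log_one_add_sqrt_one_sub (hz : z ∈ Ioo (0 : ℝ) 1) :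
    HasDerivAt (fun z => -log (1 + √(1 - z))) (ellipticKRemainder 0 z) z := by
  obtain ⟨hz0, hz1⟩ := hz
  have hw : 0 < √(1 - z) := sqrt_pos.2 (by linarith)
  have hw2 := sq_sqrt (by linarith : 0 ≤ 1 - z)
  have hz2 := sq_sqrt hz0.le
  refine ((((hasDerivAt_id' z).const_sub 1).sqrt (by linarith)).const_add 1 |>.log
    (by positivity)).neg.congr_deriv ?_
  simp only [ellipticKRemainder, zero_add, sub_zero, one_mul]
  field_simp
  linear_combination hz2 + hw2

theorem integral_ellipticKRemainder_zero : ∫ z in Ioo 0 1, ellipticKRemainder 0 z = log 2 := by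
  rw [setIntegral_Ioo_eq_sub_of_hasDerivAt_of_nonneg (f := fun z => -log (1 + √(1 - z)))
    zero_le_one (ContinuousOn.neg (ContinuousOn.log (by fun_prop) fun z _ => by positivity))
    (fun _ hz => hasDerivAt_neg_log_one_add_sqrt_one_sub hz)
    (fun _ hz => (ellipticKRemainder_nonneg_and_le le_rfl hz).1)]
  norm_num

theorem continuousAt_ellipticKRemainder (hz : z ∈ Ioo (0 : ℝ) 1) :
    ContinuousAt (fun t => ellipticKRemainder t z) 0 := by
  have ha : 0 < √z := sqrt_pos.2 hz.1
  have hb : 0 < √(1 - z) := sqrt_pos.2 (by linarith [hz.2])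
  unfold ellipticKRemainder
  fun_prop (disch := simp only [zero_add, sub_zero, one_mul]; positivity)

theorem tendsto_integral_ellipticKRemainder :
    Tendsto (fun t => ∫ z in Ioo 0 1, ellipticKRemainder t z) (𝓝[>] 0) (𝓝 (log 2)) := by
  rw [← integral_ellipticKRemainder_zero]
  refine tendsto_integral_filter_of_dominated_convergence (fun z => 1 / √(1 - z))
    (.of_forall fun _ =>
      (by unfold ellipticKRemainder; fun_prop : Measurable _).aestronglyMeasurable)
    ?_ integrableOn_one_div_sqrt_one_sub
    ((ae_restrict_iff' measurableSet_Ioo).2 (ae_of_all _ fun z hz =>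
      (continuousAt_ellipticKRemainder hz).tendsto.mono_left nhdsWithin_le_nhds))
  filter_upwards [self_mem_nhdsWithin] with t (ht : 0 < t)
  refine (ae_restrict_iff' measurableSet_Ioo).2 (ae_of_all _ fun z hz => ?_)
  obtain ⟨h0, h1⟩ := ellipticKRemainder_nonneg_and_le ht.le hz
  rwa [norm_of_nonneg h0]

theorem ellipticK_one_sub_add_log_div_two (ht : 0 < t) :
    ellipticK (1 - t) + log t / 2 =
      (∫ z in Ioo 0 1, ellipticKRemainder t z) + log (1 + √(1 + t)) := by
  have hsplit : ∀ z, 1 / (2 * √z * √(1 - z) * √(t + (1 - t) * z)) =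
      ellipticKRemainder t z + 1 / (2 * √z * √(t + z)) := fun z => by
    rw [ellipticKRemainder, sub_add_cancel]
  simp only [ellipticK_one_sub_eq_integral, hsplit]
  rw [integral_add (integrableOn_ellipticKRemainder ht.le)
    (integrableOn_one_div_two_sqrt_mul_sqrt_add ht), integral_one_div_two_sqrt_mul_sqrt_add ht]
  ring

theorem tendsto_ellipticK_one_sub_add_log_div_two :
    Tendsto (fun t => ellipticK (1 - t) + log t / 2) (𝓝[>] 0) (𝓝 (log 4)) := by
  have hlog : Tendsto (fun t => log (1 + √(1 + t))) (𝓝[>] 0) (𝓝 (log 2)) := by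
    refine tendsto_nhdsWithin_of_tendsto_nhds (ContinuousAt.tendsto ?_ |>.trans_eq ?_)
    · exact ContinuousAt.log (by fun_prop) (by positivity)
    · norm_num
  rw [show (4 : ℝ) = 2 * 2 by norm_num, log_mul two_ne_zero two_ne_zero]
  refine (tendsto_integral_ellipticKRemainder.add hlog).congr' ?_
  filter_upwards [self_mem_nhdsWithin] with t (ht : 0 < t)
  exact (ellipticK_one_sub_add_log_div_two ht).symm

end Remainder

theorem nome_asymptotics (K : ℝ → ℝ)
    (hK : ∀ t : ℝ, K t = ∫ x in Set.Ioo (0 : ℝ) 1,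
      1 / Real.sqrt ((1 - x ^ 2) * (1 - t * x ^ 2))) :
    Tendsto (fun t : ℝ => Real.exp (-π * K (1 - t) / K t) / t)
      (nhdsWithin 0 (Set.Ioi 0)) (nhds (1 / 16)) := by
  obtain rfl : K = ellipticK := funext hK
  have hlim : Tendsto (fun t => -(π / ellipticK t) * (ellipticK (1 - t) + log t / 2) +
      (π / ellipticK t - 2) * log t / 2) (𝓝[>] 0) (𝓝 (-(2 * log 4))) := by
    simpa using (tendsto_pi_div_ellipticK.neg.mul tendsto_ellipticK_one_sub_add_log_div_two).add
      (tendsto_pi_div_ellipticK_sub_two_mul_log.div_const 2)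
  have h16 : exp (-(2 * log 4)) = 1 / 16 := by
    rw [← log_rpow (by norm_num), ← log_inv, exp_log (by positivity)]
    norm_num
  rw [← h16]
  refine ((continuous_exp.tendsto _).comp hlim).congr' ?_
  filter_upwards [self_mem_nhdsWithin] with t (ht : 0 < t)
  rw [Function.comp_apply, show -(π / ellipticK t) * (ellipticK (1 - t) + log t / 2) +
      (π / ellipticK t - 2) * log t / 2 = -π * ellipticK (1 - t) / ellipticK t - log t by ring,
    exp_sub, exp_log ht]
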